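/- In a non-degenerate RiFle assignment game, the set of unmatched agents is the same in every stable outcome. -/

import Mathlib

open Finset

/-- The RiFle assignment game: `n` P-agents and `n` Q-agents, prescribed payoff
shares `β i j` (to `p i`) and `γ i j` (to `q j`), each agent rigid or flexible. -/
structure RiFle (n : ℕ) where
  β : Fin n → Fin n → ℝ
  γ : Fin n → Fin n → ℝ
  β_nonneg : ∀ i j, 0 ≤ β i j
  γ_nonneg : ∀ i j, 0 ≤ γ i j
  rigidP : Fin n → Prop
  rigidQ : Fin n → Prop

namespace RiFle

variable {n : ℕ}

/-- Joint productivity of a pair. -/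
def α (G : RiFle n) (i j : Fin n) : ℝ := G.β i j + G.γ i j

/-- A pair is rigid if at least one of its members is rigid. -/
def RigidPair (G : RiFle n) (i j : Fin n) : Prop := G.rigidP i ∨ G.rigidQ j

/-- A (partial) matching of P-agents to Q-agents, given as a partial map from P to Q
that is injective on matched agents. -/
def Matching (μ : Fin n → Option (Fin n)) : Prop :=
  ∀ i i' j, μ i = some j → μ i' = some j → i = i'

/-- Feasibility of an outcome: individual rationality, rigidity, and Pareto optimality. -/
def Feasible (G : RiFle n) (μ : Fin n → Option (Fin n)) (u v : Fin n → ℝ) : Prop :=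
  Matching μ ∧
  (∀ i, 0 ≤ u i) ∧ (∀ j, 0 ≤ v j) ∧
  (∀ i j, μ i = some j → G.rigidP i → u i = G.β i j ∧ (¬ G.rigidQ j → G.γ i j ≤ v j)) ∧
  (∀ i j, μ i = some j → G.rigidQ j → v j = G.γ i j ∧ (¬ G.rigidP i → G.β i j ≤ u i)) ∧
  ((∑ i, u i) + (∑ j, v j) = ∑ i, (μ i).elim 0 (fun j => G.α i j))

/-- Stability: feasibility plus absence of blocking pairs. -/
def Stable (G : RiFle n) (μ : Fin n → Option (Fin n)) (u v : Fin n → ℝ) : Prop :=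
  G.Feasible μ u v ∧
  (∀ i j, ¬ G.RigidPair i j → G.α i j ≤ u i + v j) ∧
  (∀ i j, G.RigidPair i j → G.β i j ≤ u i ∨ G.γ i j ≤ v j)

end RiFle
namespace RiFle

variable {n : ℕ}

/-- The total payoff to a coalition `(CP, CQ)` under `μ` is forced if every matched
pair crossing the boundary of the coalition is rigid. -/
def Forced (G : RiFle n) (μ : Fin n → Option (Fin n)) (CP CQ : Finset (Fin n)) : Prop :=
  ∀ i j, μ i = some j → ((i ∈ CP ∧ j ∉ CQ) ∨ (i ∉ CP ∧ j ∈ CQ)) → G.RigidPair i j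

/-- The forced total payoff to a coalition. -/
def ForcedPay (G : RiFle n) (μ : Fin n → Option (Fin n)) (CP CQ : Finset (Fin n)) : ℝ :=
  (∑ i ∈ CP, (μ i).elim 0 (fun j => G.β i j)) +
  (∑ i : Fin n, (μ i).elim 0 (fun j => if j ∈ CQ then G.γ i j else 0))

/-- Non-degeneracy: for any two matchings and any minimal nonempty coalition whose
payoff is forced under both, equality of the forced payoffs implies that the two
matchings coincide on the coalition. -/
def NonDegenerate (G : RiFle n) : Prop :=
  ∀ (μ μ' : Fin n → Option (Fin n)) (CP CQ : Finset (Fin n)),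
    Matching μ → Matching μ' →
    G.Forced μ CP CQ → G.Forced μ' CP CQ →
    (CP.Nonempty ∨ CQ.Nonempty) →
    (∀ CP' CQ' : Finset (Fin n), CP' ⊆ CP → CQ' ⊆ CQ → (CP' ≠ CP ∨ CQ' ≠ CQ) →
      (CP'.Nonempty ∨ CQ'.Nonempty) → ¬ (G.Forced μ CP' CQ' ∧ G.Forced μ' CP' CQ')) →
    G.ForcedPay μ CP CQ = G.ForcedPay μ' CP CQ →
    (∀ i ∈ CP, μ i = μ' i) ∧ (∀ i j, j ∈ CQ → (μ i = some j ↔ μ' i = some j))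

end RiFle


namespace RiFle

variable {n : ℕ}

/-- The set of matched pairs of a matching. -/
def edges (μ : Fin n → Option (Fin n)) : Finset (Fin n × Fin n) :=
  Finset.univ.filter (fun p => μ p.1 = some p.2)

lemma mem_edges {μ : Fin n → Option (Fin n)} {p : Fin n × Fin n} :
    p ∈ edges μ ↔ μ p.1 = some p.2 := by simp [edges]

lemma sum_option_elim (μ : Fin n → Option (Fin n)) (f : Fin n → Fin n → ℝ) :
    ∑ i, (μ i).elim 0 (f i) = ∑ p ∈ edges μ, f p.1 p.2 := by
  rw [edges, Finset.sum_filter, Fintype.sum_prod_type]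
  refine (Finset.sum_congr rfl fun i _ => ?_).symm
  cases hμ : μ i with
  | none => simp [hμ]
  | some j0 =>
    simp only [hμ, Option.elim, Option.some.injEq]
    rw [Finset.sum_congr rfl (fun j _ => ?_), Finset.sum_ite_eq Finset.univ j0 (fun j => f i j)]
    · simp
    · rw [eq_comm]

lemma sum_edges_fst {μ : Fin n → Option (Fin n)} (g : Fin n → ℝ) :
    ∑ p ∈ edges μ, g p.1 = ∑ i ∈ (edges μ).image Prod.fst, g i := by
  rw [Finset.sum_image]
  intro p hp q hq hpq
  rw [Finset.mem_coe, mem_edges] at hp hq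
  apply Prod.ext hpq
  rw [hpq] at hp; rw [hp] at hq; exact (Option.some_inj.mp hq)

lemma sum_edges_snd {μ : Fin n → Option (Fin n)} (hM : Matching μ) (g : Fin n → ℝ) :
    ∑ p ∈ edges μ, g p.2 = ∑ j ∈ (edges μ).image Prod.snd, g j := by
  rw [Finset.sum_image]
  intro p hp q hq hpq
  rw [Finset.mem_coe, mem_edges] at hp hq
  rw [hpq] at hp
  exact Prod.ext (hM _ _ _ hp hq) hpq

lemma mem_image_fst {μ : Fin n → Option (Fin n)} {i : Fin n} :
    i ∈ (edges μ).image Prod.fst ↔ ∃ j, μ i = some j := by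
  constructor
  · rintro h
    obtain ⟨p, hp, rfl⟩ := Finset.mem_image.mp h
    exact ⟨p.2, mem_edges.mp hp⟩
  · rintro ⟨j, hj⟩
    exact Finset.mem_image.mpr ⟨(i, j), mem_edges.mpr hj, rfl⟩

lemma mem_image_snd {μ : Fin n → Option (Fin n)} {j : Fin n} :
    j ∈ (edges μ).image Prod.snd ↔ ∃ i, μ i = some j := by
  constructor
  · rintro h
    obtain ⟨p, hp, rfl⟩ := Finset.mem_image.mp h
    exact ⟨p.1, mem_edges.mp hp⟩
  · rintro ⟨i, hi⟩
    exact Finset.mem_image.mpr ⟨(i, j), mem_edges.mpr hi, rfl⟩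

lemma pair_bound {G : RiFle n} {μ : Fin n → Option (Fin n)} {u v : Fin n → ℝ}
    (h : G.Stable μ u v) : ∀ i j, μ i = some j → G.α i j ≤ u i + v j := by
  intro i j hij
  obtain ⟨⟨hM, hu, hv, hrp, hrq, htot⟩, hblock, hrigid⟩ := h
  by_cases hr : G.RigidPair i j
  · rcases hr with hP | hQ
    · have h1 := hrp i j hij hP
      by_cases hQ' : G.rigidQ j
      · have h2 := hrq i j hij hQ'
        rw [α, h1.1, h2.1]
      · have h2 := h1.2 hQ'
        rw [α]; linarith [h1.1.ge, h1.1.le]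
    · have h2 := hrq i j hij hQ
      by_cases hP' : G.rigidP i
      · have h1 := hrp i j hij hP'
        rw [α, h1.1, h2.1]
      · have h1 := h2.2 hP'
        rw [α]; linarith [h2.1.ge, h2.1.le]
  · exact hblock i j hr

lemma stable_key {G : RiFle n} {μ : Fin n → Option (Fin n)} {u v : Fin n → ℝ}
    (h : G.Stable μ u v) :
    (∀ i j, μ i = some j → u i + v j = G.α i j) ∧
    (∀ i, μ i = none → u i = 0) ∧
    (∀ j, (∀ i, μ i ≠ some j) → v j = 0) := by
  have hpb := pair_bound h
  obtain ⟨⟨hM, hu, hv, hrp, hrq, htot⟩, hblock, hrigid⟩ := h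
  set E := edges μ with hE
  have h1 : ∑ i, (μ i).elim 0 (fun j => G.α i j) = ∑ p ∈ E, G.α p.1 p.2 :=
    sum_option_elim μ (fun i j => G.α i j)
  have h2 : ∑ p ∈ E, u p.1 = ∑ i ∈ E.image Prod.fst, u i := sum_edges_fst u
  have h3 : ∑ p ∈ E, v p.2 = ∑ j ∈ E.image Prod.snd, v j := sum_edges_snd hM v
  have h4 : (∑ i ∈ Finset.univ \ E.image Prod.fst, u i) + ∑ i ∈ E.image Prod.fst, u i
      = ∑ i, u i := Finset.sum_sdiff (Finset.subset_univ _)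
  have h5 : (∑ j ∈ Finset.univ \ E.image Prod.snd, v j) + ∑ j ∈ E.image Prod.snd, v j
      = ∑ j, v j := Finset.sum_sdiff (Finset.subset_univ _)
  have keyA : ∑ p ∈ E, (u p.1 + v p.2 - G.α p.1 p.2)
      = (∑ i ∈ E.image Prod.fst, u i + ∑ j ∈ E.image Prod.snd, v j) - ∑ p ∈ E, G.α p.1 p.2 := by
    rw [Finset.sum_sub_distrib, Finset.sum_add_distrib, h2, h3]
  have key : (∑ p ∈ E, (u p.1 + v p.2 - G.α p.1 p.2))
      + (∑ i ∈ Finset.univ \ E.image Prod.fst, u i)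
      + (∑ j ∈ Finset.univ \ E.image Prod.snd, v j) = 0 := by
    rw [keyA]; rw [h1] at htot; linarith
  have n1 : ∀ p ∈ E, (0:ℝ) ≤ u p.1 + v p.2 - G.α p.1 p.2 := by
    intro p hp; have := hpb p.1 p.2 (mem_edges.mp hp); linarith
  have n2 : ∀ i ∈ Finset.univ \ E.image Prod.fst, (0:ℝ) ≤ u i := fun i _ => hu i
  have n3 : ∀ j ∈ Finset.univ \ E.image Prod.snd, (0:ℝ) ≤ v j := fun j _ => hv j
  have s1 := Finset.sum_nonneg n1
  have s2 := Finset.sum_nonneg n2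
  have s3 := Finset.sum_nonneg n3
  have e1 : ∑ p ∈ E, (u p.1 + v p.2 - G.α p.1 p.2) = 0 := by linarith
  have e2 : ∑ i ∈ Finset.univ \ E.image Prod.fst, u i = 0 := by linarith
  have e3 : ∑ j ∈ Finset.univ \ E.image Prod.snd, v j = 0 := by linarith
  refine ⟨?_, ?_, ?_⟩
  · intro i j hij
    have := (Finset.sum_eq_zero_iff_of_nonneg n1).mp e1 (i, j) (mem_edges.mpr hij)
    simp at this; linarith
  · intro i hi
    refine (Finset.sum_eq_zero_iff_of_nonneg n2).mp e2 i ?_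
    simp only [Finset.mem_sdiff, Finset.mem_univ, true_and]
    intro hc
    obtain ⟨j, hj⟩ := mem_image_fst.mp hc
    rw [hi] at hj; exact absurd hj (by simp)
  · intro j hj
    refine (Finset.sum_eq_zero_iff_of_nonneg n3).mp e3 j ?_
    simp only [Finset.mem_sdiff, Finset.mem_univ, true_and]
    intro hc
    obtain ⟨i, hi⟩ := mem_image_snd.mp hc
    exact hj i hi

lemma rigid_split {G : RiFle n} {μ : Fin n → Option (Fin n)} {u v : Fin n → ℝ}
    (h : G.Stable μ u v) {i j : Fin n} (hij : μ i = some j) (hr : G.RigidPair i j) :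
    u i = G.β i j ∧ v j = G.γ i j := by
  have hs := (stable_key h).1 i j hij
  rw [α] at hs
  rcases hr with hP | hQ
  · have h1 := (h.1.2.2.2.1 i j hij hP).1
    constructor
    · exact h1
    · linarith
  · have h2 := (h.1.2.2.2.2.1 i j hij hQ).1
    constructor
    · linarith
    · exact h2

end RiFle

namespace RiFle

variable {n : ℕ}

lemma forcedPay_eq {G : RiFle n} {μ : Fin n → Option (Fin n)} {u v : Fin n → ℝ}
    (h : G.Stable μ u v) {CP CQ : Finset (Fin n)} (hF : G.Forced μ CP CQ) :
    G.ForcedPay μ CP CQ = (∑ i ∈ CP, u i) + ∑ j ∈ CQ, v j := by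
  obtain ⟨hsplit, huz, hvz⟩ := stable_key h
  have hM : Matching μ := h.1.1
  set E := edges μ with hE
  -- first ForcedPay sum as an edge sum
  have e1 : (∑ i ∈ CP, (μ i).elim 0 (fun j => G.β i j))
      = ∑ p ∈ E, (if p.1 ∈ CP then G.β p.1 p.2 else 0) := by
    have hpt : ∀ i, (if i ∈ CP then (μ i).elim 0 (fun j => G.β i j) else 0)
        = (μ i).elim 0 (fun j => if i ∈ CP then G.β i j else 0) := by
      intro i; cases μ i <;> by_cases hi : i ∈ CP <;> simp [hi]
    calc ∑ i ∈ CP, (μ i).elim 0 (fun j => G.β i j)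
        = ∑ i ∈ Finset.univ ∩ CP, (μ i).elim 0 (fun j => G.β i j) := by
          rw [Finset.univ_inter]
      _ = ∑ i, (if i ∈ CP then (μ i).elim 0 (fun j => G.β i j) else 0) := by
          rw [Finset.sum_ite_mem]
      _ = ∑ i, (μ i).elim 0 (fun j => if i ∈ CP then G.β i j else 0) := by
          exact Finset.sum_congr rfl fun i _ => hpt i
      _ = ∑ p ∈ E, (if p.1 ∈ CP then G.β p.1 p.2 else 0) :=
          sum_option_elim μ (fun i j => if i ∈ CP then G.β i j else 0)
  have e2 : (∑ i : Fin n, (μ i).elim 0 (fun j => if j ∈ CQ then G.γ i j else 0))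
      = ∑ p ∈ E, (if p.2 ∈ CQ then G.γ p.1 p.2 else 0) :=
    sum_option_elim μ (fun i j => if j ∈ CQ then G.γ i j else 0)
  -- u-sum as edge sum
  have e3 : (∑ i ∈ CP, u i) = ∑ p ∈ E, (if p.1 ∈ CP then u p.1 else 0) := by
    have h2 : ∑ p ∈ E, (if p.1 ∈ CP then u p.1 else 0)
        = ∑ i ∈ E.image Prod.fst, (if i ∈ CP then u i else 0) :=
      sum_edges_fst (fun i => if i ∈ CP then u i else 0)
    have h4 : (∑ i ∈ Finset.univ \ E.image Prod.fst, (if i ∈ CP then u i else 0))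
        + ∑ i ∈ E.image Prod.fst, (if i ∈ CP then u i else 0)
        = ∑ i, (if i ∈ CP then u i else 0) := Finset.sum_sdiff (Finset.subset_univ _)
    have h0 : ∀ i ∈ Finset.univ \ E.image Prod.fst, (if i ∈ CP then u i else 0) = 0 := by
      intro i hi
      simp only [Finset.mem_sdiff, Finset.mem_univ, true_and] at hi
      have hnone : μ i = none := by
        cases hμ : μ i with
        | none => rfl
        | some j => exact absurd (mem_image_fst.mpr ⟨j, hμ⟩) hi
      rw [huz i hnone]; simp
    rw [Finset.sum_eq_zero h0, zero_add] at h4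
    rw [h2, h4, Finset.sum_ite_mem, Finset.univ_inter]
  -- v-sum as edge sum
  have e4 : (∑ j ∈ CQ, v j) = ∑ p ∈ E, (if p.2 ∈ CQ then v p.2 else 0) := by
    have h2 : ∑ p ∈ E, (if p.2 ∈ CQ then v p.2 else 0)
        = ∑ j ∈ E.image Prod.snd, (if j ∈ CQ then v j else 0) :=
      sum_edges_snd hM (fun j => if j ∈ CQ then v j else 0)
    have h4 : (∑ j ∈ Finset.univ \ E.image Prod.snd, (if j ∈ CQ then v j else 0))
        + ∑ j ∈ E.image Prod.snd, (if j ∈ CQ then v j else 0)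
        = ∑ j, (if j ∈ CQ then v j else 0) := Finset.sum_sdiff (Finset.subset_univ _)
    have h0 : ∀ j ∈ Finset.univ \ E.image Prod.snd, (if j ∈ CQ then v j else 0) = 0 := by
      intro j hj
      simp only [Finset.mem_sdiff, Finset.mem_univ, true_and] at hj
      have hnone : ∀ i, μ i ≠ some j := by
        intro i hi
        exact hj (mem_image_snd.mpr ⟨i, hi⟩)
      rw [hvz j hnone]; simp
    rw [Finset.sum_eq_zero h0, zero_add] at h4
    rw [h2, h4, Finset.sum_ite_mem, Finset.univ_inter]
  rw [ForcedPay, e1, e2, e3, e4, ← Finset.sum_add_distrib, ← Finset.sum_add_distrib]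
  refine Finset.sum_congr rfl fun p hp => ?_
  have hpe : μ p.1 = some p.2 := mem_edges.mp hp
  by_cases h1 : p.1 ∈ CP <;> by_cases h2 : p.2 ∈ CQ <;> simp only [h1, h2, if_pos, if_neg,
    not_false_iff, add_zero, zero_add, if_true, if_false]
  · have := hsplit p.1 p.2 hpe; rw [α] at this; linarith
  · have := (rigid_split h hpe (hF p.1 p.2 hpe (Or.inl ⟨h1, h2⟩))).1; linarith
  · have := (rigid_split h hpe (hF p.1 p.2 hpe (Or.inr ⟨h1, h2⟩))).2; linarith

lemma edge_mu' {G : RiFle n} {μ μ' : Fin n → Option (Fin n)} {u v u' v' : Fin n → ℝ}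
    (h : G.Stable μ u v) (h' : G.Stable μ' u' v') {i j : Fin n} (hij : μ' i = some j) :
    (¬ G.RigidPair i j → 0 ≤ (u i - u' i) + (v j - v' j)) ∧
    (G.RigidPair i j → 0 ≤ u i - u' i ∨ 0 ≤ v j - v' j) := by
  have hs := (stable_key h').1 i j hij
  constructor
  · intro hr
    have hb := h.2.1 i j hr
    linarith
  · intro hr
    have hbs := rigid_split h' hij hr
    rcases h.2.2 i j hr with hb | hb
    · left; linarith [hbs.1]
    · right; linarith [hbs.2]

lemma edge_mu {G : RiFle n} {μ μ' : Fin n → Option (Fin n)} {u v u' v' : Fin n → ℝ}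
    (h : G.Stable μ u v) (h' : G.Stable μ' u' v') {i j : Fin n} (hij : μ i = some j) :
    (¬ G.RigidPair i j → (u i - u' i) + (v j - v' j) ≤ 0) ∧
    (G.RigidPair i j → u i - u' i ≤ 0 ∨ v j - v' j ≤ 0) := by
  have := edge_mu' h' h hij
  constructor
  · intro hr; have := this.1 hr; linarith
  · intro hr
    rcases this.2 hr with hb | hb
    · left; linarith
    · right; linarith

end RiFle

namespace RiFle

variable {n : ℕ}

/-- Alternating walk in the symmetric difference of two matchings, stored in
reverse-chronological order (most recent vertex first). Steps from a P-vertex use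
`μ'`-edges, steps from a Q-vertex use `μ`-edges. -/
inductive IsWalk (μ μ' : Fin n → Option (Fin n)) : List (Fin n ⊕ Fin n) → Prop
  | startP (i : Fin n) : μ i = none → IsWalk μ μ' [.inl i]
  | startQ (j : Fin n) : (∀ i, μ' i ≠ some j) → IsWalk μ μ' [.inr j]
  | stepPQ {t : List (Fin n ⊕ Fin n)} {i : Fin n} (j : Fin n) :
      IsWalk μ μ' (.inl i :: t) → μ' i = some j → IsWalk μ μ' (.inr j :: .inl i :: t)
  | stepQP {t : List (Fin n ⊕ Fin n)} {j : Fin n} (i : Fin n) :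
      IsWalk μ μ' (.inr j :: t) → μ i = some j → IsWalk μ μ' (.inl i :: .inr j :: t)

/-- Structure of a walk at any position: the element following a vertex records the
matched edge going backwards. -/
lemma walk_struct {μ μ' : Fin n → Option (Fin n)} {t : List (Fin n ⊕ Fin n)}
    (hw : IsWalk μ μ' t) :
    ∀ (A : List (Fin n ⊕ Fin n)) (w : Fin n ⊕ Fin n) (B : List (Fin n ⊕ Fin n)),
      t = A ++ w :: B →
      (∀ i, w = .inl i →
        (B = [] ∧ μ i = none) ∨ (∃ j B', B = .inr j :: B' ∧ μ i = some j)) ∧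
      (∀ j, w = .inr j →
        (B = [] ∧ ∀ i, μ' i ≠ some j) ∨ (∃ i B', B = .inl i :: B' ∧ μ' i = some j)) := by
  induction hw with
  | startP i h =>
    intro A w B hAB
    rcases A with _ | ⟨a, A'⟩
    · simp only [List.nil_append, List.cons.injEq] at hAB
      obtain ⟨rfl, hB⟩ := hAB
      constructor
      · rintro i' hi'
        cases hi'
        exact Or.inl ⟨hB.symm, h⟩
      · rintro j hj; cases hj
    · simp only [List.cons_append, List.cons.injEq] at hAB
      exact absurd hAB.2 (by simp)
  | startQ j h =>
    intro A w B hAB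
    rcases A with _ | ⟨a, A'⟩
    · simp only [List.nil_append, List.cons.injEq] at hAB
      obtain ⟨rfl, hB⟩ := hAB
      constructor
      · rintro i hi; cases hi
      · rintro j' hj'
        cases hj'
        exact Or.inl ⟨hB.symm, h⟩
    · simp only [List.cons_append, List.cons.injEq] at hAB
      exact absurd hAB.2 (by simp)
  | stepPQ j hw hj ih =>
    intro A w B hAB
    rcases A with _ | ⟨a, A'⟩
    · simp only [List.nil_append, List.cons.injEq] at hAB
      obtain ⟨rfl, hB⟩ := hAB
      constructor
      · rintro i hi; cases hi
      · rintro j' hj'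
        cases hj'
        exact Or.inr ⟨_, _, hB.symm, hj⟩
    · simp only [List.cons_append, List.cons.injEq] at hAB
      exact ih A' w B hAB.2
  | stepQP i hw hi ih =>
    intro A w B hAB
    rcases A with _ | ⟨a, A'⟩
    · simp only [List.nil_append, List.cons.injEq] at hAB
      obtain ⟨rfl, hB⟩ := hAB
      constructor
      · rintro i' hi'
        cases hi'
        exact Or.inr ⟨_, _, hB.symm, hi⟩
      · rintro j hj; cases hj
    · simp only [List.cons_append, List.cons.injEq] at hAB
      exact ih A' w B hAB.2

lemma walk_nodup {μ μ' : Fin n → Option (Fin n)} (hM : Matching μ) (hM' : Matching μ')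
    {t : List (Fin n ⊕ Fin n)} (hw : IsWalk μ μ' t) : t.Nodup := by
  induction hw with
  | startP i h => simp
  | startQ j h => simp
  | stepPQ j hw hj ih =>
    rename_i t i
    refine List.nodup_cons.mpr ⟨?_, ih⟩
    intro hmem
    obtain ⟨A, B, hAB⟩ := List.append_of_mem hmem
    have hs := (walk_struct hw A _ B hAB).2 j rfl
    rcases hs with ⟨hB, hnone⟩ | ⟨i', B', rfl, hi'⟩
    · exact hnone i hj
    · have : i' = i := hM' _ _ _ hi' hj
      subst this
      -- inl i' occurs inside the tail of (inl i' :: t); contradiction with nodup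
      rcases A with _ | ⟨a, A'⟩
      · simp only [List.nil_append, List.cons.injEq] at hAB
        exact absurd hAB.1 (by simp)
      · simp only [List.cons_append, List.cons.injEq] at hAB
        obtain ⟨rfl, hT⟩ := hAB
        have : Sum.inl i' ∈ t := by
          rw [hT]
          exact List.mem_append.mpr (Or.inr (by simp))
        exact (List.nodup_cons.mp ih).1 this
  | stepQP i hw hi ih =>
    rename_i t j
    refine List.nodup_cons.mpr ⟨?_, ih⟩
    intro hmem
    obtain ⟨A, B, hAB⟩ := List.append_of_mem hmem
    have hs := (walk_struct hw A _ B hAB).1 i rfl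
    rcases hs with ⟨hB, hnone⟩ | ⟨j', B', rfl, hj'⟩
    · rw [hi] at hnone; exact absurd hnone (by simp)
    · have : j' = j := by rw [hi] at hj'; exact (Option.some_inj.mp hj').symm
      subst this
      rcases A with _ | ⟨a, A'⟩
      · simp only [List.nil_append, List.cons.injEq] at hAB
        exact absurd hAB.1 (by simp)
      · simp only [List.cons_append, List.cons.injEq] at hAB
        obtain ⟨rfl, hT⟩ := hAB
        have : Sum.inr j' ∈ t := by
          rw [hT]
          exact List.mem_append.mpr (Or.inr (by simp))
        exact (List.nodup_cons.mp ih).1 this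

/-- Adjacency inside a block: consecutive vertices joined by a non-rigid matched edge. -/
def Adj (G : RiFle n) (μ μ' : Fin n → Option (Fin n)) (a b : Fin n ⊕ Fin n) : Prop :=
  (∃ i j, a = .inl i ∧ b = .inr j ∧ μ i = some j ∧ ¬ G.RigidPair i j) ∨
  (∃ i j, a = .inr j ∧ b = .inl i ∧ μ' i = some j ∧ ¬ G.RigidPair i j)

/-- If two block-adjacent positions hold a P-agent and a Q-agent, that pair is rigid. -/
def RigidB (G : RiFle n) (a b : Fin n ⊕ Fin n) : Prop :=
  ∀ i j, (a = .inl i ∧ b = .inr j) ∨ (a = .inr j ∧ b = .inl i) → G.RigidPair i j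

def blkP (blk : List (Fin n ⊕ Fin n)) : Finset (Fin n) :=
  (blk.filterMap Sum.getLeft?).toFinset

def blkQ (blk : List (Fin n ⊕ Fin n)) : Finset (Fin n) :=
  (blk.filterMap Sum.getRight?).toFinset

lemma mem_blkP {blk : List (Fin n ⊕ Fin n)} {i : Fin n} :
    i ∈ blkP blk ↔ .inl i ∈ blk := by
  simp only [blkP, List.mem_toFinset, List.mem_filterMap]
  constructor
  · rintro ⟨w, hw, hg⟩
    cases w with
    | inl i' => simp at hg; subst hg; exact hw
    | inr j => simp at hg
  · intro hw; exact ⟨.inl i, hw, rfl⟩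

lemma mem_blkQ {blk : List (Fin n ⊕ Fin n)} {j : Fin n} :
    j ∈ blkQ blk ↔ .inr j ∈ blk := by
  simp only [blkQ, List.mem_toFinset, List.mem_filterMap]
  constructor
  · rintro ⟨w, hw, hg⟩
    cases w with
    | inr j' => simp at hg; subst hg; exact hw
    | inl i => simp at hg
  · intro hw; exact ⟨.inr j, hw, rfl⟩

/-- The running block total. -/
def Asum (u v u' v' : Fin n → ℝ) (blk : List (Fin n ⊕ Fin n)) : ℝ :=
  (∑ i ∈ blkP blk, (u i - u' i)) + ∑ j ∈ blkQ blk, (v j - v' j)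

lemma Asum_singleP (u v u' v' : Fin n → ℝ) (i : Fin n) :
    Asum u v u' v' [.inl i] = u i - u' i := by
  simp [Asum, blkP, blkQ, List.filterMap_cons]

lemma Asum_singleQ (u v u' v' : Fin n → ℝ) (j : Fin n) :
    Asum u v u' v' [.inr j] = v j - v' j := by
  simp [Asum, blkP, blkQ, List.filterMap_cons]

lemma Asum_consP (u v u' v' : Fin n → ℝ) (i : Fin n) {blk : List (Fin n ⊕ Fin n)}
    (hnotin : .inl i ∉ blk) :
    Asum u v u' v' (.inl i :: blk) = (u i - u' i) + Asum u v u' v' blk := by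
  have h1 : blkP (.inl i :: blk) = insert i (blkP blk) := by
    ext x; simp [mem_blkP, List.mem_cons]
  have h2 : blkQ (.inl i :: blk) = blkQ blk := by
    ext x; simp [mem_blkQ, List.mem_cons]
  rw [Asum, Asum, h1, h2, Finset.sum_insert (fun hc => hnotin (mem_blkP.mp hc))]
  ring

lemma Asum_consQ (u v u' v' : Fin n → ℝ) (j : Fin n) {blk : List (Fin n ⊕ Fin n)}
    (hnotin : .inr j ∉ blk) :
    Asum u v u' v' (.inr j :: blk) = (v j - v' j) + Asum u v u' v' blk := by
  have h1 : blkQ (.inr j :: blk) = insert j (blkQ blk) := by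
    ext x; simp [mem_blkQ, List.mem_cons]
  have h2 : blkP (.inr j :: blk) = blkP blk := by
    ext x; simp [mem_blkP, List.mem_cons]
  rw [Asum, Asum, h1, h2, Finset.sum_insert (fun hc => hnotin (mem_blkQ.mp hc))]
  ring

lemma chain'_middle {α : Type*} {R : α → α → Prop} :
    ∀ (X : List α) {a b : α} {Y : List α}, List.Chain' R (X ++ a :: b :: Y) → R a b
  | [], a, b, Y, h => (List.isChain_cons_cons.mp h).1
  | x :: X, a, b, Y, h => chain'_middle X h.tail

lemma chain'_cross {α : Type*} {R : α → α → Prop} (P : α → Prop) :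
    ∀ (l : List α), List.Chain' R l → (∃ a ∈ l, P a) → (∃ b ∈ l, ¬ P b) →
      ∃ a b, R a b ∧ ((P a ∧ ¬ P b) ∨ (¬ P a ∧ P b)) := by
  intro l
  induction l with
  | nil => rintro _ ⟨a, ha, _⟩ _; simp at ha
  | cons x l ih =>
    intro hc hin hout
    rcases l with _ | ⟨y, l'⟩
    · obtain ⟨a, ha, hPa⟩ := hin
      obtain ⟨b, hb, hPb⟩ := hout
      simp only [List.mem_singleton] at ha hb
      subst ha; subst hb; exact absurd hPa hPb
    · have hxy : R x y := (List.isChain_cons_cons.mp hc).1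
      by_cases hPx : P x <;> by_cases hPy : P y
      · obtain ⟨b, hb, hPb⟩ := hout
        have hb' : b ∈ y :: l' := by
          rcases List.mem_cons.mp hb with rfl | hmem
          · exact absurd hPx hPb
          · exact hmem
        exact ih hc.tail ⟨y, List.mem_cons_self, hPy⟩ ⟨b, hb', hPb⟩
      · exact ⟨x, y, hxy, Or.inl ⟨hPx, hPy⟩⟩
      · exact ⟨x, y, hxy, Or.inr ⟨hPx, hPy⟩⟩
      · obtain ⟨a, ha, hPa⟩ := hin
        have ha' : a ∈ y :: l' := by
          rcases List.mem_cons.mp ha with rfl | hmem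
          · exact absurd hPa hPx
          · exact hmem
        exact ih hc.tail ⟨a, ha', hPa⟩ ⟨y, List.mem_cons_self, hPy⟩

end RiFle

namespace RiFle

variable {n : ℕ}

lemma closeBlock {G : RiFle n} {μ μ' : Fin n → Option (Fin n)} {u v u' v' : Fin n → ℝ}
    (h : G.Stable μ u v) (h' : G.Stable μ' u' v') (hnd : G.NonDegenerate)
    {blk rest : List (Fin n ⊕ Fin n)}
    (hblk : blk ≠ [])
    (hw : IsWalk μ μ' (blk ++ rest))
    (hchain : List.Chain' (Adj G μ μ') blk)
    (hS3 : ∀ w w', blk.getLast? = some w → rest.head? = some w' → RigidB G w w')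
    (hdiffP : ∀ i, .inl i ∈ blk → μ i ≠ μ' i)
    (hdiffQ : ∀ j, .inr j ∈ blk →
      ∃ i, (μ' i = some j ∧ ¬ μ i = some j) ∨ (μ i = some j ∧ ¬ μ' i = some j))
    (hheadP : ∀ i, blk.head? = some (.inl i) →
      μ' i = none ∨ ∃ j, μ' i = some j ∧ G.RigidPair i j)
    (hheadQ : ∀ j, blk.head? = some (.inr j) →
      (∀ i, μ i ≠ some j) ∨ ∃ i, μ i = some j ∧ G.RigidPair i j)
    (hA0 : Asum u v u' v' blk = 0) :
    False := by
  have hM : Matching μ := h.1.1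
  have hM' : Matching μ' := h'.1.1
  set CP := blkP blk with hCP
  set CQ := blkQ blk with hCQ
  -- Forced under μ
  have hFμ : G.Forced μ CP CQ := by
    intro i j hij hcross
    rcases hcross with ⟨hiCP, hjCQ⟩ | ⟨hiCP, hjCQ⟩
    · have hib : Sum.inl i ∈ blk := mem_blkP.mp hiCP
      obtain ⟨X, Y, hXY⟩ := List.append_of_mem hib
      rcases Y with _ | ⟨w, Y'⟩
      · -- inl i is the last element of the block
        have hlast : blk.getLast? = some (.inl i) := by
          rw [hXY]; exact List.getLast?_concat
        have hs := (walk_struct hw X (.inl i) rest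
          (by rw [hXY]; simp)).1 i rfl
        rcases hs with ⟨hrnil, hnone⟩ | ⟨j', R', hR, hj'⟩
        · rw [hnone] at hij; exact absurd hij (by simp)
        · have hjj : j' = j := by rw [hij] at hj'; exact (Option.some_inj.mp hj').symm
          subst hjj
          have := hS3 (.inl i) (.inr j') hlast (by rw [hR]; rfl)
          exact this i j' (Or.inl ⟨rfl, rfl⟩)
      · -- inl i has a successor w inside the block
        have hadj : Adj G μ μ' (.inl i) w :=
          chain'_middle X (by rw [hXY] at hchain; exact hchain)
        rcases hadj with ⟨i0, j0, hi0, hj0, hedge, hnr⟩ | ⟨i0, j0, hj0, hi0, hedge, hnr⟩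
        · cases hi0
          have : j0 = j := by rw [hij] at hedge; exact (Option.some_inj.mp hedge).symm
          subst this
          exact absurd (mem_blkQ.mpr (by rw [hXY, hj0]; simp)) hjCQ
        · cases hj0
    · have hjb : Sum.inr j ∈ blk := mem_blkQ.mp hjCQ
      obtain ⟨X, Y, hXY⟩ := List.append_of_mem hjb
      rcases List.eq_nil_or_concat X with rfl | ⟨X', w, rfl⟩
      · -- inr j is the head of the block
        have hhd : blk.head? = some (.inr j) := by rw [hXY]; rfl
        rcases hheadQ j hhd with hnone | ⟨i', hi', hr⟩
        · exact absurd hij (hnone i)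
        · have : i' = i := hM _ _ _ hi' hij
          subst this; exact hr
      · -- inr j has a predecessor w inside the block
        have hadj : Adj G μ μ' w (.inr j) := by
          have hch := hchain
          rw [hXY, List.concat_eq_append, List.append_assoc] at hch
          exact chain'_middle X' hch
        rcases hadj with ⟨i0, j0, hi0, hj0, hedge, hnr⟩ | ⟨i0, j0, hj0, hi0, hedge, hnr⟩
        · cases hj0
          have : i0 = i := hM _ _ _ hedge hij
          subst this
          exact absurd (mem_blkP.mpr (by rw [hXY, hi0]; simp)) hiCP
        · cases hi0
  -- Forced under μ'
  have hFμ' : G.Forced μ' CP CQ := by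
    intro i j hij hcross
    rcases hcross with ⟨hiCP, hjCQ⟩ | ⟨hiCP, hjCQ⟩
    · have hib : Sum.inl i ∈ blk := mem_blkP.mp hiCP
      obtain ⟨X, Y, hXY⟩ := List.append_of_mem hib
      rcases List.eq_nil_or_concat X with rfl | ⟨X', w, rfl⟩
      · have hhd : blk.head? = some (.inl i) := by rw [hXY]; rfl
        rcases hheadP i hhd with hnone | ⟨j', hj', hr⟩
        · rw [hnone] at hij; exact absurd hij (by simp)
        · have : j' = j := by rw [hij] at hj'; exact (Option.some_inj.mp hj').symm
          subst this; exact hr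
      · have hadj : Adj G μ μ' w (.inl i) := by
          have hch := hchain
          rw [hXY, List.concat_eq_append, List.append_assoc] at hch
          exact chain'_middle X' hch
        rcases hadj with ⟨i0, j0, hi0, hj0, hedge, hnr⟩ | ⟨i0, j0, hj0, hi0, hedge, hnr⟩
        · cases hj0
        · cases hi0
          have : j0 = j := by rw [hij] at hedge; exact (Option.some_inj.mp hedge).symm
          subst this
          exact absurd (mem_blkQ.mpr (by rw [hXY, hj0]; simp)) hjCQ
    · have hjb : Sum.inr j ∈ blk := mem_blkQ.mp hjCQ
      obtain ⟨X, Y, hXY⟩ := List.append_of_mem hjb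
      rcases Y with _ | ⟨w, Y'⟩
      · have hlast : blk.getLast? = some (.inr j) := by
          rw [hXY]; exact List.getLast?_concat
        have hs := (walk_struct hw X (.inr j) rest
          (by rw [hXY]; simp)).2 j rfl
        rcases hs with ⟨hrnil, hnone⟩ | ⟨i', R', hR, hi'⟩
        · exact absurd hij (hnone i)
        · have : i' = i := hM' _ _ _ hi' hij
          subst this
          have := hS3 (.inr j) (.inl i') hlast (by rw [hR]; rfl)
          exact this i' j (Or.inr ⟨rfl, rfl⟩)
      · have hadj : Adj G μ μ' (.inr j) w :=
          chain'_middle X (by rw [hXY] at hchain; exact hchain)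
        rcases hadj with ⟨i0, j0, hi0, hj0, hedge, hnr⟩ | ⟨i0, j0, hj0, hi0, hedge, hnr⟩
        · cases hi0
        · cases hj0
          have : i0 = i := hM' _ _ _ hedge hij
          subst this
          exact absurd (mem_blkP.mpr (by rw [hXY, hi0]; simp)) hiCP
  -- nonemptiness
  have hne : CP.Nonempty ∨ CQ.Nonempty := by
    rcases blk with _ | ⟨w, bt⟩
    · exact absurd rfl hblk
    · cases w with
      | inl i => exact Or.inl ⟨i, mem_blkP.mpr (List.mem_cons_self)⟩
      | inr j => exact Or.inr ⟨j, mem_blkQ.mpr (List.mem_cons_self)⟩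
  -- minimality
  have hmin : ∀ CP' CQ' : Finset (Fin n), CP' ⊆ CP → CQ' ⊆ CQ →
      (CP' ≠ CP ∨ CQ' ≠ CQ) → (CP'.Nonempty ∨ CQ'.Nonempty) →
      ¬ (G.Forced μ CP' CQ' ∧ G.Forced μ' CP' CQ') := by
    intro CP' CQ' hsubP hsubQ hneq hne' ⟨hf, hf'⟩
    set Pm : (Fin n ⊕ Fin n) → Prop := Sum.elim (· ∈ CP') (· ∈ CQ') with hPm
    have hin : ∃ a ∈ blk, Pm a := by
      rcases hne' with ⟨x, hx⟩ | ⟨x, hx⟩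
      · exact ⟨.inl x, mem_blkP.mp (hsubP hx), hx⟩
      · exact ⟨.inr x, mem_blkQ.mp (hsubQ hx), hx⟩
    have hout : ∃ b ∈ blk, ¬ Pm b := by
      rcases hneq with hne1 | hne2
      · obtain ⟨x, hx, hnx⟩ := Finset.exists_of_ssubset (hsubP.ssubset_of_ne hne1)
        exact ⟨.inl x, mem_blkP.mp hx, hnx⟩
      · obtain ⟨x, hx, hnx⟩ := Finset.exists_of_ssubset (hsubQ.ssubset_of_ne hne2)
        exact ⟨.inr x, mem_blkQ.mp hx, hnx⟩
    obtain ⟨a, b, hab, hxor⟩ := chain'_cross Pm blk hchain hin hout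
    rcases hab with ⟨i0, j0, rfl, rfl, hedge, hnr⟩ | ⟨i0, j0, rfl, rfl, hedge, hnr⟩
    · simp only [hPm, Sum.elim_inl, Sum.elim_inr] at hxor
      exact hnr (hf i0 j0 hedge hxor)
    · simp only [hPm, Sum.elim_inl, Sum.elim_inr] at hxor
      refine hnr (hf' i0 j0 hedge ?_)
      tauto
  -- forced payoffs agree
  have hpay : G.ForcedPay μ CP CQ = G.ForcedPay μ' CP CQ := by
    rw [forcedPay_eq h hFμ, forcedPay_eq h' hFμ']
    have := hA0
    rw [Asum, Finset.sum_sub_distrib, Finset.sum_sub_distrib] at this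
    rw [← hCP, ← hCQ] at this
    linarith
  obtain ⟨H1, H2⟩ := hnd μ μ' CP CQ hM hM' hFμ hFμ' hne hmin hpay
  -- contradiction at the head of the block
  rcases blk with _ | ⟨w, bt⟩
  · exact absurd rfl hblk
  · cases w with
    | inl i =>
      exact hdiffP i (List.mem_cons_self)
        (H1 i (mem_blkP.mpr (List.mem_cons_self)))
    | inr j =>
      obtain ⟨i, hcase⟩ := hdiffQ j (List.mem_cons_self)
      have hj : j ∈ CQ := mem_blkQ.mpr (List.mem_cons_self)
      rcases hcase with ⟨h1, h2⟩ | ⟨h1, h2⟩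
      · exact h2 ((H2 i j hj).mpr h1)
      · exact h2 ((H2 i j hj).mp h1)

end RiFle

namespace RiFle

variable {n : ℕ}

lemma master {G : RiFle n} {μ μ' : Fin n → Option (Fin n)} {u v u' v' : Fin n → ℝ}
    (h : G.Stable μ u v) (h' : G.Stable μ' u' v') (hnd : G.NonDegenerate) :
    ∀ (fuel : ℕ) (blk rest : List (Fin n ⊕ Fin n)),
      blk ≠ [] →
      IsWalk μ μ' (blk ++ rest) →
      List.Chain' (Adj G μ μ') blk →
      (∀ w w', blk.getLast? = some w → rest.head? = some w' → RigidB G w w') →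
      (∀ i, .inl i ∈ blk → μ i ≠ μ' i) →
      (∀ j, .inr j ∈ blk →
        ∃ i, (μ' i = some j ∧ ¬ μ i = some j) ∨ (μ i = some j ∧ ¬ μ' i = some j)) →
      (∀ i, blk.head? = some (.inl i) →
        Asum u v u' v' blk ≤ 0 ∧ u i - u' i ≤ Asum u v u' v' blk) →
      (∀ j, blk.head? = some (.inr j) →
        0 ≤ Asum u v u' v' blk ∧ Asum u v u' v' blk ≤ v j - v' j) →
      n + n < (blk ++ rest).length + fuel → False := by
  have hM : Matching μ := h.1.1
  have hM' : Matching μ' := h'.1.1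
  intro fuel
  induction fuel with
  | zero =>
    intro blk rest hblk hw _ _ _ _ _ _ hlen
    have hnd2 := walk_nodup hM hM' hw
    have := hnd2.length_le_card
    rw [Fintype.card_sum, Fintype.card_fin] at this
    omega
  | succ fuel ih =>
    rintro (_ | ⟨w, bt⟩) rest hblk hw hchain hS3 hdiffP hdiffQ hAP hAQ hlen
    · exact absurd rfl hblk
    cases w with
    | inl i =>
      have hAi := hAP i rfl
      cases hm' : μ' i with
      | none =>
        refine closeBlock h h' hnd hblk hw hchain hS3 hdiffP hdiffQ ?_ ?_ ?_
        · intro i' hi'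
          simp only [List.head?_cons, Option.some_inj] at hi'
          cases hi'
          exact Or.inl hm'
        · intro j hj
          simp only [List.head?_cons, Option.some_inj] at hj
          cases hj
        · have hu0 : u' i = 0 := (stable_key h').2.1 i hm'
          have hu1 : 0 ≤ u i := h.1.2.1 i
          linarith [hAi.1, hAi.2]
      | some j =>
        by_cases hr : G.RigidPair i j
        · rcases (edge_mu' h h' hm').2 hr with hd | he
          · -- close the block here
            refine closeBlock h h' hnd hblk hw hchain hS3 hdiffP hdiffQ ?_ ?_ ?_
            · intro i' hi'
              simp only [List.head?_cons, Option.some_inj] at hi'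
              cases hi'
              exact Or.inr ⟨j, hm', hr⟩
            · intro j' hj'
              simp only [List.head?_cons, Option.some_inj] at hj'
              cases hj'
            · linarith [hAi.1, hAi.2]
          · -- start a new block at j
            have hw2 : IsWalk μ μ' ([.inr j] ++ ((.inl i :: bt) ++ rest)) :=
              IsWalk.stepPQ j hw hm'
            have hnd2 := walk_nodup hM hM' hw2
            have hμne : ¬ μ i = some j := by
              rcases ((walk_struct hw [] (.inl i) (bt ++ rest) rfl).1 i rfl) with
                ⟨_, hnone⟩ | ⟨j2, B', hB, hj2⟩
              · rw [hnone]; simp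
              · have hj2ne : j2 ≠ j := by
                  intro hjj
                  subst hjj
                  have hmem : Sum.inr j2 ∈ (Sum.inl i :: bt) ++ rest := by
                    simp only [List.cons_append]
                    exact List.mem_cons.mpr (Or.inr (by rw [hB]; simp))
                  exact (List.nodup_cons.mp hnd2).1 hmem
                rw [hj2]
                simp [hj2ne]
            refine ih [.inr j] ((.inl i :: bt) ++ rest) (by simp) hw2
              (List.isChain_singleton _) ?_ ?_ ?_ ?_ ?_ ?_
            · intro w w' hgl hhd
              simp only [List.getLast?_singleton, Option.some_inj] at hgl
              simp only [List.cons_append, List.head?_cons, Option.some_inj] at hhd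
              subst hgl; subst hhd
              rintro i0 j0 (⟨h1, h2⟩ | ⟨h1, h2⟩)
              · exact absurd h1 (by simp)
              · cases h1; cases h2; exact hr
            · intro i' hi'; simp at hi'
            · intro j' hj'
              simp only [List.mem_singleton, Sum.inr.injEq] at hj'
              subst hj'
              exact ⟨i, Or.inl ⟨hm', hμne⟩⟩
            · intro i' hi'; simp at hi'
            · intro j' hj'
              simp only [List.head?_cons, Option.some_inj, Sum.inr.injEq] at hj'
              subst hj'
              rw [Asum_singleQ]
              exact ⟨he, le_refl _⟩
            · simp only [List.length_append, List.length_singleton, List.length_cons] at *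
              omega
        · -- extend the block with j
          have hde := (edge_mu' h h' hm').1 hr
          have hw2 : IsWalk μ μ' ((.inr j :: .inl i :: bt) ++ rest) :=
            IsWalk.stepPQ j hw hm'
          have hnd2 := walk_nodup hM hM' hw2
          have hnotin : Sum.inr j ∉ (Sum.inl i :: bt) := by
            intro hc
            exact (List.nodup_cons.mp hnd2).1 (List.mem_append.mpr (Or.inl hc))
          have hμne : ¬ μ i = some j := by
            rcases ((walk_struct hw [] (.inl i) (bt ++ rest) rfl).1 i rfl) with
              ⟨_, hnone⟩ | ⟨j2, B', hB, hj2⟩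
            · rw [hnone]; simp
            · have hj2ne : j2 ≠ j := by
                intro hjj
                subst hjj
                have hmem : Sum.inr j2 ∈ (Sum.inl i :: bt) ++ rest := by
                  simp only [List.cons_append]
                  exact List.mem_cons.mpr (Or.inr (by rw [hB]; simp))
                exact (List.nodup_cons.mp hnd2).1 hmem
              rw [hj2]
              simp [hj2ne]
          have hA2 : Asum u v u' v' (.inr j :: .inl i :: bt)
              = (v j - v' j) + Asum u v u' v' (.inl i :: bt) :=
            Asum_consQ u v u' v' j hnotin
          refine ih (.inr j :: .inl i :: bt) rest (by simp) hw2
            (List.isChain_cons_cons.mpr ⟨Or.inr ⟨i, j, rfl, rfl, hm', hr⟩, hchain⟩) ?_ ?_ ?_ ?_ ?_ ?_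
          · intro w w' hgl hhd
            rw [List.getLast?_cons_cons] at hgl
            exact hS3 w w' hgl hhd
          · intro i' hi'
            rcases List.mem_cons.mp hi' with hc | hc
            · exact absurd hc (by simp)
            · exact hdiffP i' hc
          · intro j' hj'
            rcases List.mem_cons.mp hj' with hc | hc
            · cases hc
              exact ⟨i, Or.inl ⟨hm', hμne⟩⟩
            · exact hdiffQ j' hc
          · intro i' hi'
            simp only [List.head?_cons, Option.some_inj] at hi'
            cases hi'
          · intro j' hj'
            simp only [List.head?_cons, Option.some_inj, Sum.inr.injEq] at hj'
            subst hj'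
            rw [hA2]
            constructor
            · linarith [hAi.2]
            · linarith [hAi.1]
          · simp only [List.length_append, List.length_cons] at *
            omega
    | inr j =>
      have hAj := hAQ j rfl
      by_cases hex : ∃ i, μ i = some j
      · obtain ⟨i, hi⟩ := hex
        by_cases hr : G.RigidPair i j
        · rcases (edge_mu h h' hi).2 hr with hd | he
          · -- start a new block at i
            have hw2 : IsWalk μ μ' ([.inl i] ++ ((.inr j :: bt) ++ rest)) :=
              IsWalk.stepQP i hw hi
            have hnd2 := walk_nodup hM hM' hw2
            have hμ'ne : ¬ μ' i = some j := by
              rcases ((walk_struct hw [] (.inr j) (bt ++ rest) rfl).2 j rfl) with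
                ⟨_, hnone⟩ | ⟨i2, B', hB, hi2⟩
              · exact hnone i
              · intro hc
                have : i = i2 := hM' _ _ _ hc hi2
                subst this
                have hmem : Sum.inl i ∈ (Sum.inr j :: bt) ++ rest := by
                  simp only [List.cons_append]
                  exact List.mem_cons.mpr (Or.inr (by rw [hB]; simp))
                exact (List.nodup_cons.mp hnd2).1 hmem
            refine ih [.inl i] ((.inr j :: bt) ++ rest) (by simp) hw2
              (List.isChain_singleton _) ?_ ?_ ?_ ?_ ?_ ?_
            · intro w w' hgl hhd
              simp only [List.getLast?_singleton, Option.some_inj] at hgl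
              simp only [List.cons_append, List.head?_cons, Option.some_inj] at hhd
              subst hgl; subst hhd
              rintro i0 j0 (⟨h1, h2⟩ | ⟨h1, h2⟩)
              · cases h1; cases h2; exact hr
              · exact absurd h1 (by simp)
            · intro i' hi'
              simp only [List.mem_singleton, Sum.inl.injEq] at hi'
              subst hi'
              intro heq
              rw [heq] at hi
              exact hμ'ne hi
            · intro j' hj'; simp at hj'
            · intro i' hi'
              simp only [List.head?_cons, Option.some_inj, Sum.inl.injEq] at hi'
              subst hi'
              rw [Asum_singleP]
              exact ⟨hd, le_refl _⟩
            · intro j' hj'; simp at hj'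
            · simp only [List.length_append, List.length_singleton, List.length_cons] at *
              omega
          · -- close the block
            refine closeBlock h h' hnd hblk hw hchain hS3 hdiffP hdiffQ ?_ ?_ ?_
            · intro i' hi'
              simp only [List.head?_cons, Option.some_inj] at hi'
              cases hi'
            · intro j' hj'
              simp only [List.head?_cons, Option.some_inj] at hj'
              cases hj'
              exact Or.inr ⟨i, hi, hr⟩
            · linarith [hAj.1, hAj.2]
        · -- extend the block with i
          have hde := (edge_mu h h' hi).1 hr
          have hw2 : IsWalk μ μ' ((.inl i :: .inr j :: bt) ++ rest) :=
            IsWalk.stepQP i hw hi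
          have hnd2 := walk_nodup hM hM' hw2
          have hnotin : Sum.inl i ∉ (Sum.inr j :: bt) := by
            intro hc
            exact (List.nodup_cons.mp hnd2).1 (List.mem_append.mpr (Or.inl hc))
          have hμ'ne : ¬ μ' i = some j := by
            rcases ((walk_struct hw [] (.inr j) (bt ++ rest) rfl).2 j rfl) with
              ⟨_, hnone⟩ | ⟨i2, B', hB, hi2⟩
            · exact hnone i
            · intro hc
              have : i = i2 := hM' _ _ _ hc hi2
              subst this
              have hmem : Sum.inl i ∈ (Sum.inr j :: bt) ++ rest := by
                simp only [List.cons_append]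
                exact List.mem_cons.mpr (Or.inr (by rw [hB]; simp))
              exact (List.nodup_cons.mp hnd2).1 hmem
          have hA2 : Asum u v u' v' (.inl i :: .inr j :: bt)
              = (u i - u' i) + Asum u v u' v' (.inr j :: bt) :=
            Asum_consP u v u' v' i hnotin
          refine ih (.inl i :: .inr j :: bt) rest (by simp) hw2
            (List.isChain_cons_cons.mpr ⟨Or.inl ⟨i, j, rfl, rfl, hi, hr⟩, hchain⟩) ?_ ?_ ?_ ?_ ?_ ?_
          · intro w w' hgl hhd
            rw [List.getLast?_cons_cons] at hgl
            exact hS3 w w' hgl hhd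
          · intro i' hi'
            rcases List.mem_cons.mp hi' with hc | hc
            · cases hc
              intro heq
              rw [heq] at hi
              exact hμ'ne hi
            · exact hdiffP i' hc
          · intro j' hj'
            rcases List.mem_cons.mp hj' with hc | hc
            · exact absurd hc (by simp)
            · exact hdiffQ j' hc
          · intro i' hi'
            simp only [List.head?_cons, Option.some_inj, Sum.inl.injEq] at hi'
            subst hi'
            rw [hA2]
            constructor
            · linarith [hAj.2]
            · linarith [hAj.1]
          · intro j' hj'
            simp only [List.head?_cons, Option.some_inj] at hj'
            cases hj'
          · simp only [List.length_append, List.length_cons] at *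
            omega
      · -- j is unmatched under μ : close the block
        push_neg at hex
        refine closeBlock h h' hnd hblk hw hchain hS3 hdiffP hdiffQ ?_ ?_ ?_
        · intro i' hi'
          simp only [List.head?_cons, Option.some_inj] at hi'
          cases hi'
        · intro j' hj'
          simp only [List.head?_cons, Option.some_inj] at hj'
          cases hj'
          exact Or.inl hex
        · have hv0 : v j = 0 := (stable_key h).2.2 j hex
          have hv1 : 0 ≤ v' j := h'.1.2.2.1 j
          linarith [hAj.1, hAj.2]

end RiFle

namespace RiFle

variable {n : ℕ}

/-- If some P-agent is unmatched under the first stable outcome but matched under the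
second, we get a contradiction. -/
lemma keyP {G : RiFle n} (hnd : G.NonDegenerate)
    {μ μ' : Fin n → Option (Fin n)} {u v u' v' : Fin n → ℝ}
    (h : G.Stable μ u v) (h' : G.Stable μ' u' v')
    {i : Fin n} {j : Fin n} (hi : μ i = none) (hij : μ' i = some j) : False := by
  refine master h h' hnd (n + n + 1) [.inl i] [] (by simp)
    (by simpa using IsWalk.startP (μ := μ) (μ' := μ') i hi)
    (List.isChain_singleton _) ?_ ?_ ?_ ?_ ?_ ?_
  · intro w w' _ hw'
    simp at hw'
  · intro i' hi'
    simp only [List.mem_singleton, Sum.inl.injEq] at hi'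
    subst hi'
    rw [hi, hij]
    simp
  · intro j' hj'
    simp at hj'
  · intro i' hi'
    simp only [List.head?_cons, Option.some_inj, Sum.inl.injEq] at hi'
    subst hi'
    rw [Asum_singleP]
    have hu0 : u i = 0 := (stable_key h).2.1 i hi
    have hu1 : 0 ≤ u' i := h'.1.2.1 i
    constructor <;> linarith
  · intro j' hj'
    simp at hj'
  · simp; omega

/-- If some Q-agent is matched under the first stable outcome but unmatched under the
second, we get a contradiction. -/
lemma keyQ {G : RiFle n} (hnd : G.NonDegenerate)
    {μ μ' : Fin n → Option (Fin n)} {u v u' v' : Fin n → ℝ}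
    (h : G.Stable μ u v) (h' : G.Stable μ' u' v')
    {j : Fin n} (hj : ∀ i, μ' i ≠ some j) {i : Fin n} (hij : μ i = some j) : False := by
  refine master h h' hnd (n + n + 1) [.inr j] [] (by simp)
    (by simpa using IsWalk.startQ (μ := μ) (μ' := μ') j hj)
    (List.isChain_singleton _) ?_ ?_ ?_ ?_ ?_ ?_
  · intro w w' _ hw'
    simp at hw'
  · intro i' hi'
    simp at hi'
  · intro j' hj'
    simp only [List.mem_singleton, Sum.inr.injEq] at hj'
    subst hj'
    exact ⟨i, Or.inr ⟨hij, hj i⟩⟩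
  · intro i' hi'
    simp at hi'
  · intro j' hj'
    simp only [List.head?_cons, Option.some_inj, Sum.inr.injEq] at hj'
    subst hj'
    rw [Asum_singleQ]
    have hv0 : v' j = 0 := (stable_key h').2.2 j hj
    have hv1 : 0 ≤ v j := h.1.2.2.1 j
    constructor <;> linarith
  · simp; omega

end RiFle


/-- in a non-degenerate game, the set of unmatched agents is the same
in every stable outcome. -/
theorem stmt10 {n : ℕ} (G : RiFle n) (hnd : G.NonDegenerate)
    (μ μ' : Fin n → Option (Fin n)) (u v u' v' : Fin n → ℝ)
    (h : G.Stable μ u v) (h' : G.Stable μ' u' v') :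
    (∀ i, μ i = none ↔ μ' i = none) ∧
    (∀ j, (∀ i, μ i ≠ some j) ↔ (∀ i, μ' i ≠ some j)) := by
  constructor
  · intro i
    constructor
    · intro h0
      by_contra hc
      obtain ⟨j, hj⟩ := Option.ne_none_iff_exists'.mp hc
      exact RiFle.keyP hnd h h' h0 hj
    · intro h0
      by_contra hc
      obtain ⟨j, hj⟩ := Option.ne_none_iff_exists'.mp hc
      exact RiFle.keyP hnd h' h h0 hj
  · intro j
    constructor
    · intro hall i' hij
      exact RiFle.keyQ hnd h' h hall hij
    · intro hall i' hij
      exact RiFle.keyQ hnd h h' hall hij
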